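/- arXiv:2302.04605 — 2 statements merged into one kernel-verified Lean document; each statement's English description precedes it below -/
import Mathlib

section
/- Hardy's relation: the Euler–Gompertz constant δ = ∫₀^∞ ln(t+1) e^{-t} dt satisfies δ = e·(-γ + ∑_{k=1}^∞ (-1)^{k+1}/(k·k!)), where γ is the Euler–Mascheroni constant. -/
/-!
Substituting `x = t + 1` gives `δ = e ∫_{x > 1} log x e^{-x} dx`. Over `(0, ∞)` the same integral
is `Γ'(1) = -γ`; over `(0, 1]` expand `e^{-x}` into its power series and integrate termwise,
using `∫₀¹ xⁿ log x dx = -1/(n+1)²`, which produces minus the alternating series.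
-/

open MeasureTheory Real Set Filter
open scoped Nat

lemma setIntegral_Ioi_comp_add_right {E : Type*} [NormedAddCommGroup E] [NormedSpace ℝ E]
    (f : ℝ → E) (a c : ℝ) : ∫ t in Ioi a, f (t + c) = ∫ x in Ioi (a + c), f x := by
  have h := (measurePreserving_add_right volume c).setIntegral_preimage_emb
    (measurableEmbedding_addRight c) f (Ioi (a + c))
  rwa [preimage_add_const_Ioi, add_sub_cancel_right] at h

lemma integral_Ioi_comp_add_one_mul_exp_neg (f : ℝ → ℝ) :
    ∫ t in Ioi 0, f (t + 1) * exp (-t) = exp 1 * ∫ x in Ioi 1, f x * exp (-x) := by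
  have h := setIntegral_Ioi_comp_add_right (fun x => exp 1 * (f x * exp (-x))) 0 1
  rw [zero_add] at h
  rw [← integral_const_mul, ← h]
  congr 1 with t
  rw [mul_left_comm, ← exp_add]
  ring_nf

lemma integral_pow_mul_log_zero_one (n : ℕ) :
    ∫ x in (0 : ℝ)..1, x ^ n * log x = -1 / ((n : ℝ) + 1) ^ 2 := by
  -- `x * log x` is continuous at `0`, so `F` is continuous on `[0, 1]`
  let F : ℝ → ℝ := fun x => x ^ n * (x * log x) / (n + 1) - x ^ (n + 1) / (n + 1) ^ 2
  have hF : ∀ x ∈ Ioo (0 : ℝ) 1, HasDerivAt F (x ^ n * log x) x := by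
    intro x hx
    have h1 : HasDerivAt (fun x : ℝ => x ^ (n + 1)) ((n + 1 : ℝ) * x ^ n) x := by
      simpa using hasDerivAt_pow (n + 1) x
    have h := ((h1.mul (hasDerivAt_log hx.1.ne')).div_const ((n : ℝ) + 1)).sub
      (h1.div_const (((n : ℝ) + 1) ^ 2))
    refine (h.congr_deriv ?_).congr_of_eventuallyEq (Eventually.of_forall fun y => ?_)
    · field_simp [hx.1.ne']; ring
    · simp only [F, Pi.sub_apply, Pi.mul_apply]; ring
  have hint : IntervalIntegrable (fun x : ℝ => x ^ n * log x) volume 0 1 := by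
    rw [intervalIntegrable_iff_integrableOn_Ioc_of_le zero_le_one]
    refine (intervalIntegral.intervalIntegrable_log'.1).bdd_mul (c := 1) (by fun_prop) ?_
    refine (ae_restrict_iff' measurableSet_Ioc).2 (ae_of_all _ fun x hx => ?_)
    rw [norm_pow, Real.norm_of_nonneg hx.1.le]
    exact pow_le_one₀ hx.1.le hx.2
  rw [intervalIntegral.integral_eq_sub_of_hasDerivAt_of_le zero_le_one
    (by fun_prop [continuous_mul_log]) hF hint]
  simp [F, field]

lemma hasSum_setIntegral_mul_exp_neg {g : ℝ → ℝ} (hg : IntegrableOn g (Ioc 0 1)) :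
    HasSum (fun n : ℕ => (-1) ^ n / n ! * ∫ x in Ioc 0 1, x ^ n * g x)
      (∫ x in Ioc 0 1, g x * exp (-x)) := by
  have hsum : Summable fun n : ℕ => 1 / (n ! : ℝ) := by
    simpa using Real.summable_pow_div_factorial 1
  simp_rw [← integral_const_mul]
  refine hasSum_integral_of_dominated_convergence (fun n x => ‖g x‖ * (1 / n !))
    (fun n => (((continuous_pow n).aestronglyMeasurable).mul hg.1).const_mul _) (fun n => ?_)
    (ae_of_all _ fun x => hsum.mul_left _) ?_ (ae_of_all _ fun x => ?_)
  · refine (ae_restrict_iff' measurableSet_Ioc).2 (ae_of_all _ fun x hx => ?_)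
    rw [norm_mul, norm_mul, norm_div, norm_pow, norm_pow, norm_neg, norm_one, one_pow,
      Real.norm_natCast, Real.norm_of_nonneg hx.1.le, mul_comm]
    gcongr
    exact mul_le_of_le_one_left (norm_nonneg _) (pow_le_one₀ hx.1.le hx.2)
  · simp_rw [tsum_mul_left]
    exact hg.norm.mul_const _
  · have h := (NormedSpace.expSeries_div_hasSum_exp (-x)).mul_left (g x)
    rw [← Real.exp_eq_exp_ℝ] at h
    have hterm : (fun n : ℕ => (-1) ^ n / n ! * (x ^ n * g x)) = fun n => g x * ((-x) ^ n / n !) :=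
      funext fun n => by rw [neg_pow]; ring
    rwa [hterm]

lemma integrableOn_log_mul_exp_neg : IntegrableOn (fun x => log x * exp (-x)) (Ioi 0) := by
  rw [← Ioc_union_Ioi_eq_Ioi zero_le_one]
  refine IntegrableOn.union ?_ ?_
  · refine (intervalIntegral.intervalIntegrable_log'.1).mul_bdd (c := 1) (by fun_prop) ?_
    refine (ae_restrict_iff' measurableSet_Ioc).2 (ae_of_all _ fun x hx => ?_)
    rw [Real.norm_of_nonneg (exp_nonneg _), exp_le_one_iff, neg_nonpos]
    exact hx.1.le
  · have hdom : IntegrableOn (fun x => exp (-x) * x ^ ((2 : ℝ) - 1)) (Ioi 1) :=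
      (GammaIntegral_convergent two_pos).mono_set (Ioi_subset_Ioi zero_le_one)
    refine hdom.mono' (measurable_log.mul (by fun_prop)).aestronglyMeasurable
      ((ae_restrict_iff' measurableSet_Ioi).2 (ae_of_all _ fun x hx => ?_))
    have hx : (1 : ℝ) < x := hx
    rw [norm_mul, Real.norm_of_nonneg (log_nonneg hx.le), Real.norm_of_nonneg (exp_nonneg _),
      show (2 : ℝ) - 1 = 1 by norm_num, rpow_one, mul_comm]
    gcongr
    exact (log_le_sub_one_of_pos (by linarith)).trans (by linarith)

lemma integral_log_mul_exp_neg : ∫ x in Ioi 0, log x * exp (-x) = -eulerMascheroniConstant := by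
  set I := ∫ x in Ioi 0, log x * exp (-x)
  have hGammaIntegral : HasDerivAt Complex.GammaIntegral (I : ℂ) 1 := by
    have h := Complex.hasDerivAt_GammaIntegral (s := 1) (by norm_num)
    simp_rw [sub_self, Complex.cpow_zero, one_mul, ← Complex.ofReal_mul] at h
    rwa [integral_complex_ofReal] at h
  have hGamma : HasDerivAt (fun x : ℝ => (Gamma x : ℂ)) I 1 := by
    refine hGammaIntegral.comp_ofReal.congr_of_eventuallyEq ?_
    filter_upwards [eventually_gt_nhds one_pos] with x hx
    rw [Gamma_eq_integral hx, ← Complex.GammaIntegral_ofReal]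
  exact_mod_cast hGamma.unique hasDerivAt_Gamma_one.ofReal_comp

theorem hardy_relation :
    ∫ t in Set.Ioi (0 : ℝ), Real.log (t + 1) * exp (-t)
      = exp 1 * (-Real.eulerMascheroniConstant
          + ∑' k : ℕ, (-1 : ℝ) ^ ((k + 1) + 1) / ((k + 1) * (Nat.factorial (k + 1) : ℝ))) := by
  have hsplit : ∫ x in Ioi 0, log x * exp (-x)
      = (∫ x in Ioc 0 1, log x * exp (-x)) + ∫ x in Ioi 1, log x * exp (-x) := by
    rw [← setIntegral_union (Ioc_disjoint_Ioi le_rfl) measurableSet_Ioi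
      (integrableOn_log_mul_exp_neg.mono_set Ioc_subset_Ioi_self)
      (integrableOn_log_mul_exp_neg.mono_set (Ioi_subset_Ioi zero_le_one)),
      Ioc_union_Ioi_eq_Ioi zero_le_one]
  have hseries : HasSum (fun k : ℕ => (-1 : ℝ) ^ ((k + 1) + 1) / ((k + 1) * (k + 1)!))
      (-∫ x in Ioc 0 1, log x * exp (-x)) := by
    have hterm (k : ℕ) : (-1 : ℝ) ^ ((k + 1) + 1) / ((k + 1) * (k + 1)!)
        = -((-1) ^ k / k ! * ∫ x in Ioc 0 1, x ^ k * log x) := by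
      rw [← intervalIntegral.integral_of_le zero_le_one, integral_pow_mul_log_zero_one,
        Nat.factorial_succ]
      push_cast
      field_simp
      ring
    simpa only [hterm] using
      (hasSum_setIntegral_mul_exp_neg intervalIntegral.intervalIntegrable_log'.1).neg
  rw [integral_Ioi_comp_add_one_mul_exp_neg, hseries.tsum_eq]
  congr 1
  linarith [integral_log_mul_exp_neg]
end

section
/- If X is an Exponential random variable with rate 1, then the variance of ln X equals π²/6. -/
/-!
For `X ~ Exp(1)`, `E[(log X)^k] = ∫ (log t)^k e^{-t} dt = Γ⁽ᵏ⁾(1)` (differentiate the Mellin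
transform defining `Γ` under the integral sign), so `Var (log X) = Γ''(1) - Γ'(1)² = ψ'(1)`, where
`ψ = Γ'/Γ` is the digamma function. Differentiating the logarithmic derivatives of the reflection
and duplication formulas at `1/2` gives `2 ψ'(1/2) = π²` and `ψ'(1/2) + ψ'(1) = 4 ψ'(1)`, hence
`ψ'(1) = π²/6`.
-/

open MeasureTheory ProbabilityTheory Real Set Filter Topology Asymptotics

lemma isBigO_atTop_log_pow_mul_exp_neg (k : ℕ) (a : ℝ) :
    (fun t : ℝ => log t ^ k * exp (-t)) =O[atTop] (· ^ (-a)) := by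
  induction k generalizing a with
  | zero => simpa [neg_one_mul] using (isLittleO_exp_neg_mul_rpow_atTop one_pos (-a)).isBigO
  | succ k ih =>
    simpa [pow_succ', mul_assoc] using isBigO_rpow_top_log_smul (lt_add_one a) (ih (a + 1))

lemma isBigO_nhdsGT_zero_log_pow_mul_exp_neg (k : ℕ) {b : ℝ} (hb : 0 < b) :
    (fun t : ℝ => log t ^ k * exp (-t)) =O[𝓝[>] 0] (· ^ (-b)) := by
  have hlog : (fun t : ℝ => log t ^ k) =O[𝓝[>] 0] (· ^ (-b)) := by
    have := (isLittleO_abs_log_rpow_rpow_nhdsGT_zero (k : ℝ) (neg_neg_of_pos hb)).isBigO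
    simpa [Real.rpow_natCast, ← abs_pow] using this
  have hexp : (fun t : ℝ => exp (-t)) =O[𝓝[>] 0] (fun _ => (1 : ℝ)) :=
    (continuous_exp.comp continuous_neg).continuousWithinAt.isBigO_one ℝ
  simpa using hlog.mul hexp

lemma continuousOn_log_pow_mul_exp_neg (k : ℕ) :
    ContinuousOn (fun t : ℝ => log t ^ k * exp (-t)) (Ioi 0) :=
  ((continuousOn_log.mono fun _ ht => ne_of_gt ht).pow k).mul
    (continuous_exp.comp continuous_neg).continuousOn

lemma integrableOn_log_pow_mul_exp_neg (k : ℕ) :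
    IntegrableOn (fun t : ℝ => log t ^ k * exp (-t)) (Ioi 0) := by
  simpa using mellin_convergent_of_isBigO_scalar (s := 1)
    ((continuousOn_log_pow_mul_exp_neg k).locallyIntegrableOn measurableSet_Ioi)
    (isBigO_atTop_log_pow_mul_exp_neg k 2) one_lt_two
    (isBigO_nhdsGT_zero_log_pow_mul_exp_neg k one_half_pos) one_half_lt_one

lemma hasDerivAt_mellin_log_pow_mul_exp_neg (k : ℕ) {s : ℂ} (hs : 0 < s.re) :
    HasDerivAt (mellin fun t : ℝ => ((log t ^ k * exp (-t) : ℝ) : ℂ))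
      (mellin (fun t : ℝ => ((log t ^ (k + 1) * exp (-t) : ℝ) : ℂ)) s) s := by
  have h := mellin_hasDerivAt_of_isBigO_rpow (E := ℂ)
    ((Complex.continuous_ofReal.comp_continuousOn
      (continuousOn_log_pow_mul_exp_neg k)).locallyIntegrableOn measurableSet_Ioi)
    (Complex.isBigO_ofReal_left.2 (isBigO_atTop_log_pow_mul_exp_neg k (s.re + 1)))
    (lt_add_one _)
    (Complex.isBigO_ofReal_left.2 (isBigO_nhdsGT_zero_log_pow_mul_exp_neg k (half_pos hs)))
    (half_lt_self hs)
  have hfun : (fun t : ℝ => log t • ((log t ^ k * exp (-t) : ℝ) : ℂ))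
      = fun t : ℝ => ((log t ^ (k + 1) * exp (-t) : ℝ) : ℂ) := by
    funext t; rw [Complex.real_smul]; push_cast; ring
  rw [← hfun]
  exact h.2

namespace Complex

lemma iteratedDeriv_Gamma_eq_mellin (k : ℕ) {s : ℂ} (hs : 0 < s.re) :
    iteratedDeriv k Gamma s =
      mellin (fun t : ℝ => ((Real.log t ^ k * Real.exp (-t) : ℝ) : ℂ)) s := by
  induction k generalizing s with
  | zero => simp [Gamma_eq_integral hs, GammaIntegral_eq_mellin]
  | succ k ih =>
    have hnhds : iteratedDeriv k Gamma =ᶠ[𝓝 s]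
        mellin fun t : ℝ => ((Real.log t ^ k * Real.exp (-t) : ℝ) : ℂ) :=
      eventually_of_mem ((isOpen_lt continuous_const continuous_re).mem_nhds hs) fun _ hz => ih hz
    rw [iteratedDeriv_succ, hnhds.deriv_eq, (hasDerivAt_mellin_log_pow_mul_exp_neg k hs).deriv]

lemma iteratedDeriv_Gamma_one (k : ℕ) :
    iteratedDeriv k Gamma 1 = ∫ t in Ioi (0 : ℝ), Real.log t ^ k * Real.exp (-t) := by
  rw [iteratedDeriv_Gamma_eq_mellin k (by simp), mellin, ← integral_complex_ofReal]
  simp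

-- `Gamma` is `0` at its poles, so `Gamma s ≠ 0` says exactly that `s` is not a pole.
lemma analyticAt_Gamma {s : ℂ} (hs : Gamma s ≠ 0) : AnalyticAt ℂ Gamma s := by
  have h := (differentiable_one_div_Gamma.analyticAt s).inv (inv_ne_zero hs)
  rwa [show (fun z => (Gamma z)⁻¹)⁻¹ = Gamma from inv_inv Gamma] at h

lemma analyticAt_digamma {s : ℂ} (hs : Gamma s ≠ 0) : AnalyticAt ℂ digamma s :=
  (analyticAt_Gamma hs).deriv.div (analyticAt_Gamma hs) hs

lemma hasDerivAt_digamma {s : ℂ} (hs : Gamma s ≠ 0) : HasDerivAt digamma (deriv digamma s) s :=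
  (analyticAt_digamma hs).differentiableAt.hasDerivAt

lemma deriv_digamma {s : ℂ} (hs : Gamma s ≠ 0) :
    deriv digamma s = iteratedDeriv 2 Gamma s / Gamma s - digamma s ^ 2 := by
  have h := ((analyticAt_Gamma hs).deriv.differentiableAt.hasDerivAt).div
    (analyticAt_Gamma hs).differentiableAt.hasDerivAt hs
  rw [digamma_def, logDeriv, h.deriv, iteratedDeriv_succ, iteratedDeriv_one, Pi.div_apply]
  field_simp

lemma logDeriv_Gamma_mul_add {s a b : ℂ} (hs : Gamma (a * s + b) ≠ 0) :
    logDeriv (fun z => Gamma (a * z + b)) s = a * digamma (a * s + b) := by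
  have := logDeriv_comp (f := Gamma) (g := fun z => a * z + b) (x := s)
    (analyticAt_Gamma hs).differentiableAt (by fun_prop)
  simp only [Function.comp_def] at this
  rw [this, digamma_def]
  simp [mul_comm]

lemma digamma_one_sub_sub_digamma {s : ℂ} (hs : Gamma s ≠ 0) (hs' : Gamma (1 - s) ≠ 0) :
    digamma (1 - s) - digamma s = π * cot (π * s) := by
  have hsin : sin (π * s) ≠ 0 := fun h => mul_ne_zero hs hs' (by
    rw [Gamma_mul_Gamma_one_sub, h, div_zero])
  have key : logDeriv (fun z => Gamma z * Gamma (1 - z)) s =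
      logDeriv (fun z => π / sin (π * z)) s := by
    simp_rw [Gamma_mul_Gamma_one_sub]
  have hrefl : logDeriv (fun z => Gamma (1 - z)) s = -digamma (1 - s) := by
    simpa [sub_eq_neg_add] using
      logDeriv_Gamma_mul_add (a := -1) (b := 1) (s := s) (by simpa [sub_eq_neg_add] using hs')
  have hsin' : logDeriv (fun z => sin (π * z)) s = π * cot (π * s) := by
    rw [← Function.comp_def sin, logDeriv_comp (by fun_prop) (by fun_prop), logDeriv_sin,
      ((hasDerivAt_id' s).const_mul (π : ℂ)).deriv, mul_one, mul_comm]
  rw [logDeriv_mul (f := Gamma) (g := fun z => Gamma (1 - z)) s hs hs'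
      (analyticAt_Gamma hs).differentiableAt
      ((analyticAt_Gamma hs').differentiableAt.comp s (by fun_prop)),
    logDeriv_div s (by simp [pi_ne_zero]) hsin (by fun_prop) (by fun_prop), logDeriv_const,
    Pi.zero_apply, hrefl, hsin', ← digamma_def] at key
  linear_combination -key

lemma digamma_add_digamma_add_half {s : ℂ} (hs : Gamma s ≠ 0) (hs' : Gamma (s + 1 / 2) ≠ 0) :
    digamma s + digamma (s + 1 / 2) = 2 * digamma (2 * s) - 2 * log 2 := by
  have h2s : Gamma (2 * s) ≠ 0 := fun h => mul_ne_zero hs hs' (by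
    rw [Gamma_mul_Gamma_add_half, h, zero_mul, zero_mul])
  have hpow : (2 : ℂ) ^ (1 - 2 * s) ≠ 0 := by simp
  have hsqrt : ((√π : ℝ) : ℂ) ≠ 0 := ofReal_ne_zero.2 (Real.sqrt_ne_zero'.2 pi_pos)
  have key : logDeriv (fun z => Gamma z * Gamma (z + 1 / 2)) s =
      logDeriv (fun z => Gamma (2 * z) * (2 : ℂ) ^ (1 - 2 * z) * ((√π : ℝ) : ℂ)) s := by
    simp_rw [Gamma_mul_Gamma_add_half]
  have hshift : logDeriv (fun z => Gamma (z + 1 / 2)) s = digamma (s + 1 / 2) := by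
    simpa using logDeriv_Gamma_mul_add (a := 1) (b := 1 / 2) (s := s) (by simpa using hs')
  have hdouble : logDeriv (fun z => Gamma (2 * z)) s = 2 * digamma (2 * s) := by
    simpa using logDeriv_Gamma_mul_add (a := 2) (b := 0) (s := s) (by simpa using h2s)
  have hexp : logDeriv (fun z => (2 : ℂ) ^ (1 - 2 * z)) s = -2 * log 2 := by
    have h := (((hasDerivAt_id' s).const_mul (2 : ℂ)).const_sub 1).const_cpow (c := 2)
      (Or.inl two_ne_zero)
    rw [logDeriv_apply, h.deriv]
    field_simp
  rw [logDeriv_mul (f := Gamma) (g := fun z => Gamma (z + 1 / 2)) s hs hs'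
      (analyticAt_Gamma hs).differentiableAt
      ((analyticAt_Gamma hs').differentiableAt.comp s (by fun_prop)),
    logDeriv_mul (f := fun z => Gamma (2 * z) * (2 : ℂ) ^ (1 - 2 * z)) s (mul_ne_zero h2s hpow)
      hsqrt (((analyticAt_Gamma h2s).differentiableAt.comp s (by fun_prop)).mul (by fun_prop))
      (by fun_prop),
    logDeriv_mul (f := fun z => Gamma (2 * z)) s h2s hpow
      ((analyticAt_Gamma h2s).differentiableAt.comp s (by fun_prop)) (by fun_prop),
    logDeriv_const, Pi.zero_apply, hshift, hdouble, hexp, ← digamma_def] at key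
  linear_combination key

lemma hasDerivAt_pi_mul_cot_pi_mul_one_half :
    HasDerivAt (fun z => π * cot (π * z)) (-π ^ 2) (1 / 2) := by
  have hz : (π : ℂ) * (1 / 2) = π / 2 := by ring
  have hsin := ((hasDerivAt_id' (1 / 2 : ℂ)).const_mul (π : ℂ)).csin
  have hcos := ((hasDerivAt_id' (1 / 2 : ℂ)).const_mul (π : ℂ)).ccos
  rw [hz, cos_pi_div_two] at hsin
  rw [hz, sin_pi_div_two] at hcos
  have hsin_ne : sin (π * (1 / 2)) ≠ 0 := by rw [hz, sin_pi_div_two]; exact one_ne_zero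
  have h := (hcos.div hsin hsin_ne).const_mul (π : ℂ)
  rw [hz, sin_pi_div_two, cos_pi_div_two] at h
  exact h.congr_deriv (by ring)

lemma deriv_digamma_one_half : deriv digamma (1 / 2) = π ^ 2 / 2 := by
  have hhalf : Gamma (1 / 2) ≠ 0 := Gamma_ne_zero_of_re_pos (by norm_num)
  have hL : HasDerivAt (fun z => digamma (1 - z) - digamma z)
      (-deriv digamma (1 / 2) - deriv digamma (1 / 2)) (1 / 2) := by
    have h := HasDerivAt.comp_const_sub (1 : ℂ) (1 / 2) (hasDerivAt_digamma (s := 1 - 1 / 2)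
      (by rwa [show (1 : ℂ) - 1 / 2 = 1 / 2 by norm_num]))
    norm_num at h
    exact h.sub (hasDerivAt_digamma hhalf)
  have heq : (fun z => digamma (1 - z) - digamma z) =ᶠ[𝓝 (1 / 2)] fun z => π * cot (π * z) := by
    have hU : IsOpen {z : ℂ | 0 < z.re ∧ z.re < 1} :=
      (isOpen_lt continuous_const continuous_re).inter (isOpen_lt continuous_re continuous_const)
    filter_upwards [hU.mem_nhds (by norm_num)] with z hz
    exact digamma_one_sub_sub_digamma (Gamma_ne_zero_of_re_pos hz.1)
      (Gamma_ne_zero_of_re_pos (by simpa using hz.2))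
  have h := (hL.congr_of_eventuallyEq heq.symm).unique hasDerivAt_pi_mul_cot_pi_mul_one_half
  linear_combination -h / 2

lemma deriv_digamma_one : deriv digamma 1 = π ^ 2 / 6 := by
  have hhalf : Gamma (1 / 2) ≠ 0 := Gamma_ne_zero_of_re_pos (by norm_num)
  have hL : HasDerivAt (fun z => digamma z + digamma (z + 1 / 2))
      (deriv digamma (1 / 2) + deriv digamma 1) (1 / 2) := by
    have h := HasDerivAt.comp_add_const (1 / 2 : ℂ) (1 / 2)
      (hasDerivAt_digamma (s := 1 / 2 + 1 / 2) (by norm_num))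
    norm_num at h
    exact (hasDerivAt_digamma hhalf).add h
  have hR : HasDerivAt (fun z => 2 * digamma (2 * z) - 2 * log 2)
      (4 * deriv digamma 1) (1 / 2) := by
    have h := (hasDerivAt_digamma (s := 2 * (1 / 2)) (by norm_num)).comp (1 / 2 : ℂ)
      ((hasDerivAt_id' (1 / 2 : ℂ)).const_mul 2)
    norm_num at h
    exact ((h.const_mul 2).sub_const (2 * log 2)).congr_deriv (by ring)
  have heq : (fun z => digamma z + digamma (z + 1 / 2)) =ᶠ[𝓝 (1 / 2)]
      fun z => 2 * digamma (2 * z) - 2 * log 2 := by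
    have hU : IsOpen {z : ℂ | 0 < z.re} := isOpen_lt continuous_const continuous_re
    filter_upwards [hU.mem_nhds (by norm_num)] with z (hz : 0 < z.re)
    exact digamma_add_digamma_add_half (Gamma_ne_zero_of_re_pos hz)
      (Gamma_ne_zero_of_re_pos (by rw [add_re]; norm_num; positivity))
  have h := (hL.congr_of_eventuallyEq heq.symm).unique hR
  rw [deriv_digamma_one_half] at h
  linear_combination -h / 3

end Complex

lemma toReal_exponentialPDF_smul {r : ℝ} (hr : 0 ≤ r) (g : ℝ → ℝ) :
    (fun x => (exponentialPDF r x).toReal • g x) =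
      (Ici 0).indicator fun x => r * exp (-(r * x)) * g x := by
  funext x
  by_cases hx : 0 ≤ x
  · simp [exponentialPDF_of_nonneg hx, hx,
      ENNReal.toReal_ofReal (by positivity : 0 ≤ r * exp (-(r * x)))]
  · simp [exponentialPDF_of_neg (not_le.1 hx), hx]

lemma expMeasure_eq_withDensity (r : ℝ) :
    expMeasure r = volume.withDensity (exponentialPDF r) := rfl

lemma measurable_exponentialPDF (r : ℝ) : Measurable (exponentialPDF r) :=
  (measurable_exponentialPDFReal r).ennreal_ofReal

lemma integral_expMeasure {r : ℝ} (hr : 0 ≤ r) (g : ℝ → ℝ) :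
    ∫ x, g x ∂expMeasure r = ∫ x in Ioi 0, r * exp (-(r * x)) * g x := by
  rw [expMeasure_eq_withDensity, integral_withDensity_eq_integral_toReal_smul
    (measurable_exponentialPDF r) (.of_forall fun _ => ENNReal.ofReal_lt_top),
    toReal_exponentialPDF_smul hr, integral_indicator measurableSet_Ici,
    integral_Ici_eq_integral_Ioi]

lemma integrable_expMeasure_iff {r : ℝ} (hr : 0 ≤ r) {g : ℝ → ℝ} :
    Integrable g (expMeasure r) ↔ IntegrableOn (fun x => r * exp (-(r * x)) * g x) (Ioi 0) := by
  rw [expMeasure_eq_withDensity, integrable_withDensity_iff_integrable_smul'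
    (measurable_exponentialPDF r) (.of_forall fun _ => ENNReal.ofReal_lt_top),
    toReal_exponentialPDF_smul hr, integrable_indicator_iff measurableSet_Ici,
    integrableOn_Ici_iff_integrableOn_Ioi]

lemma integrable_log_pow_expMeasure_one (k : ℕ) :
    Integrable (fun x => log x ^ k) (expMeasure 1) := by
  rw [integrable_expMeasure_iff zero_le_one]
  simpa [mul_comm] using integrableOn_log_pow_mul_exp_neg k

lemma integral_log_pow_expMeasure_one (k : ℕ) :
    ((∫ x, log x ^ k ∂expMeasure 1 : ℝ) : ℂ) = iteratedDeriv k Complex.Gamma 1 := by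
  rw [Complex.iteratedDeriv_Gamma_one, integral_expMeasure zero_le_one]
  simp [mul_comm]

theorem variance_log_expMeasure_one : Var[log; expMeasure 1] = π ^ 2 / 6 := by
  have := isProbabilityMeasure_expMeasure one_pos
  have hL2 : MemLp log 2 (expMeasure 1) :=
    (memLp_two_iff_integrable_sq measurable_log.aestronglyMeasurable).2
      (integrable_log_pow_expMeasure_one 2)
  rw [variance_eq_sub hL2]
  apply Complex.ofReal_injective
  have h1 := integral_log_pow_expMeasure_one 1
  have h2 := integral_log_pow_expMeasure_one 2
  simp only [pow_one, iteratedDeriv_one] at h1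
  push_cast
  rw [← Complex.deriv_digamma_one, Complex.deriv_digamma (by simp), Complex.digamma_def,
    logDeriv_apply, Complex.Gamma_one, div_one, div_one, ← h1, ← h2]
  rfl

theorem variance_log_exponential_general
    {Ω : Type*} [MeasurableSpace Ω] (μ : Measure Ω)
    (X : Ω → ℝ)
    (hX : Measure.map X μ = expMeasure 1) :
    ProbabilityTheory.variance (fun ω => Real.log (X ω)) μ = π ^ 2 / 6 := by
  have hX' : AEMeasurable X μ :=
    .of_map_ne_zero (by rw [hX]; exact (isProbabilityMeasure_expMeasure one_pos).ne_zero)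
  rw [← variance_log_expMeasure_one, ← hX, variance_map measurable_log.aemeasurable hX']
  rfl

theorem variance_log_exponential
    {Ω : Type*} [MeasurableSpace Ω] (μ : Measure Ω) [IsProbabilityMeasure μ]
    (X : Ω → ℝ) (hXm : Measurable X)
    (hX : Measure.map X μ = expMeasure 1) :
    ProbabilityTheory.variance (fun ω => Real.log (X ω)) μ = π ^ 2 / 6 :=
  variance_log_exponential_general μ X hX
end
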